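/- arXiv:1508.05853 — 6 statements merged into one kernel-verified Lean document; each statement's English description precedes it below -/
import Mathlib

section
/- Let v : ℝ⁴ → ℝ⁴ be a smooth vector field normalized in the Minkowski metric, η_{μν} v^μ v^ν = 1, whose acceleration a_μ := v^ν ∂_ν v_μ (where v_μ = η_{μν} v^ν) is the gradient of a smooth function Ψ : ℝ⁴ → ℝ, i.e. a_μ = ∂_μ Ψ. Define β := e^{-2Ψ} − 1 and the dragged metric ĝ^{μν} := η^{μν} + β v^μ v^ν, whose covariant components are ĝ_{μν} = η_{μν} − (β/(1+β)) v_μ v_ν. Then the congruence of v is geodesic with respect to ĝ: at every point, (∂_ν v_μ − Γ̂^ε_{μν} v_ε) v^ν = 0, where Γ̂^ε_{μν} are the Christoffel symbols of ĝ_{μν}. -/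
open scoped BigOperators
open Matrix

noncomputable section

/-- The Minkowski metric η = diag(1,-1,-1,-1) (same components for η_{μν} and η^{μν}). -/
def η (μ ν : Fin 4) : ℝ := if μ = ν then (if μ = 0 then 1 else -1) else 0

/-- Partial derivative ∂_μ of a real-valued function on ℝ⁴ (Cartesian coordinates). -/
def pd (μ : Fin 4) (f : (Fin 4 → ℝ) → ℝ) (x : Fin 4 → ℝ) : ℝ :=
  fderiv ℝ f x (Pi.single μ 1)

/-- Christoffel symbols Γ^σ_{μν} = ½ g^{σρ}(∂_ν g_{ρμ} + ∂_μ g_{ρν} − ∂_ρ g_{μν})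
of a metric with covariant components `g` and contravariant components `ginv`. -/
def christoffel (ginv g : (Fin 4 → ℝ) → Fin 4 → Fin 4 → ℝ)
    (x : Fin 4 → ℝ) (σ μ ν : Fin 4) : ℝ :=
  (1 / 2) * ∑ ρ, ginv x σ ρ *
    (pd ν (fun y => g y ρ μ) x + pd μ (fun y => g y ρ ν) x - pd ρ (fun y => g y μ ν) x)

lemma η_00 : η 0 0 = (1:ℝ) := rfl
lemma η_01 : η 0 1 = (0:ℝ) := rfl
lemma η_02 : η 0 2 = (0:ℝ) := rfl
lemma η_03 : η 0 3 = (0:ℝ) := rfl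
lemma η_10 : η 1 0 = (0:ℝ) := rfl
lemma η_11 : η 1 1 = (-1:ℝ) := rfl
lemma η_12 : η 1 2 = (0:ℝ) := rfl
lemma η_13 : η 1 3 = (0:ℝ) := rfl
lemma η_20 : η 2 0 = (0:ℝ) := rfl
lemma η_21 : η 2 1 = (0:ℝ) := rfl
lemma η_22 : η 2 2 = (-1:ℝ) := rfl
lemma η_23 : η 2 3 = (0:ℝ) := rfl
lemma η_30 : η 3 0 = (0:ℝ) := rfl
lemma η_31 : η 3 1 = (0:ℝ) := rfl
lemma η_32 : η 3 2 = (0:ℝ) := rfl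
lemma η_33 : η 3 3 = (-1:ℝ) := rfl

section pdlemmas
variable {f g : (Fin 4 → ℝ) → ℝ} {x : Fin 4 → ℝ} {σ : Fin 4}

lemma pd_const (σ : Fin 4) (c : ℝ) (x : Fin 4 → ℝ) : pd σ (fun _ => c) x = 0 := by
  simp [pd]

lemma pd_mul (hf : DifferentiableAt ℝ f x) (hg : DifferentiableAt ℝ g x) :
    pd σ (fun y => f y * g y) x = pd σ f x * g x + f x * pd σ g x := by
  unfold pd
  rw [fderiv_fun_mul hf hg]
  simp [smul_eq_mul]
  ring

lemma pd_const_mul (c : ℝ) (hf : DifferentiableAt ℝ f x) :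
    pd σ (fun y => c * f y) x = c * pd σ f x := by
  unfold pd
  rw [fderiv_const_mul hf]
  simp

lemma pd_const_sub (c : ℝ) :
    pd σ (fun y => c - f y) x = - pd σ f x := by
  unfold pd
  rw [fderiv_const_sub]
  simp

lemma pd_sub (hf : DifferentiableAt ℝ f x) (hg : DifferentiableAt ℝ g x) :
    pd σ (fun y => f y - g y) x = pd σ f x - pd σ g x := by
  unfold pd
  rw [fderiv_fun_sub hf hg]
  simp

lemma pd_exp (hf : DifferentiableAt ℝ f x) :
    pd σ (fun y => Real.exp (f y)) x = Real.exp (f x) * pd σ f x := by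
  unfold pd
  rw [fderiv_exp hf]
  simp

lemma pd_quad (f0 f1 f2 f3 : (Fin 4 → ℝ) → ℝ)
    (h0 : DifferentiableAt ℝ f0 x) (h1 : DifferentiableAt ℝ f1 x)
    (h2 : DifferentiableAt ℝ f2 x) (h3 : DifferentiableAt ℝ f3 x) :
    pd σ (fun y => f0 y * f0 y - f1 y * f1 y - f2 y * f2 y - f3 y * f3 y) x
      = 2 * (f0 x * pd σ f0 x - f1 x * pd σ f1 x - f2 x * pd σ f2 x - f3 x * pd σ f3 x) := by
  rw [pd_sub (((h0.fun_mul h0).fun_sub (h1.fun_mul h1)).fun_sub (h2.fun_mul h2)) (h3.fun_mul h3),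
      pd_sub ((h0.fun_mul h0).fun_sub (h1.fun_mul h1)) (h2.fun_mul h2),
      pd_sub (h0.fun_mul h0) (h1.fun_mul h1),
      pd_mul h0 h0, pd_mul h1 h1, pd_mul h2 h2, pd_mul h3 h3]
  ring

end pdlemmas

/-- a unit-normalized congruence in Minkowski space whose acceleration is a
gradient, a_μ = ∂_μΨ, follows geodesics of the dragged metric
ĝ^{μν} = η^{μν} + β v^μ v^ν with β = e^{-2Ψ} − 1. -/
theorem dragged_metric_geodesic
    (v : Fin 4 → (Fin 4 → ℝ) → ℝ) (Ψ : (Fin 4 → ℝ) → ℝ)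
    (hv : ∀ μ, ContDiff ℝ (⊤ : ℕ∞) (v μ)) (hΨ : ContDiff ℝ (⊤ : ℕ∞) Ψ)
    -- covariant components v_μ = η_{μν} v^ν
    (vlow : Fin 4 → (Fin 4 → ℝ) → ℝ)
    (hvlow : ∀ μ x, vlow μ x = ∑ ν, η μ ν * v ν x)
    -- normalization η_{μν} v^μ v^ν = 1
    (hnorm : ∀ x, ∑ μ, ∑ ν, η μ ν * v μ x * v ν x = 1)
    -- the acceleration a_μ = v^ν ∂_ν v_μ is the gradient of Ψ
    (hacc : ∀ μ x, (∑ ν, v ν x * pd ν (vlow μ) x) = pd μ Ψ x)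
    -- β := e^{-2Ψ} − 1
    (β : (Fin 4 → ℝ) → ℝ) (hβ : ∀ x, β x = Real.exp (-2 * Ψ x) - 1)
    -- the dragged metric and its covariant components
    (ghat gcov : (Fin 4 → ℝ) → Fin 4 → Fin 4 → ℝ)
    (hghat : ∀ x μ ν, ghat x μ ν = η μ ν + β x * v μ x * v ν x)
    (hgcov : ∀ x μ ν, gcov x μ ν = η μ ν - (β x / (1 + β x)) * vlow μ x * vlow ν x) :
    -- geodesic equation in the dragged metric: (∂_ν v_μ − Γ̂^ε_{μν} v_ε) v^ν = 0
    ∀ x μ, ∑ ν, v ν x *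
        (pd ν (vlow μ) x - ∑ ε, christoffel ghat gcov x ε μ ν * vlow ε x) = 0 := by
  have dv : ∀ ν y, DifferentiableAt ℝ (v ν) y := fun ν y => ((hv ν).differentiable (by simp)) y
  have dΨ : ∀ y, DifferentiableAt ℝ Ψ y := fun y => (hΨ.differentiable (by simp)) y
  have hvlowfun : ∀ ρ, vlow ρ = fun y => η ρ ρ * v ρ y := by
    intro ρ
    funext y
    rw [hvlow]
    fin_cases ρ <;>
      simp [Fin.sum_univ_four, η_00, η_01, η_02, η_03, η_10, η_11, η_12, η_13, η_20, η_21, η_22, η_23, η_30, η_31, η_32, η_33]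
  have dvlow : ∀ ρ y, DifferentiableAt ℝ (vlow ρ) y := by
    intro ρ y
    rw [hvlowfun]
    exact (dv ρ y).const_mul _
  have pdvlow : ∀ σ ρ (x : Fin 4 → ℝ), pd σ (vlow ρ) x = η ρ ρ * pd σ (v ρ) x := by
    intro σ ρ x
    rw [hvlowfun]
    exact pd_const_mul _ (dv ρ x)
  have hgfun : ∀ ρ τ, (fun y => gcov y ρ τ)
      = fun y => η ρ τ - (1 - Real.exp (2 * Ψ y)) * (vlow ρ y * vlow τ y) := by
    intro ρ τ
    funext y
    rw [hgcov]
    have he : Real.exp (-2 * Ψ y) * Real.exp (2 * Ψ y) = 1 := by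
      rw [← Real.exp_add]
      norm_num
    have hne : Real.exp (-2 * Ψ y) ≠ 0 := (Real.exp_pos _).ne'
    have h1 : β y / (1 + β y) = 1 - Real.exp (2 * Ψ y) := by
      rw [hβ]
      have hden : 1 + (Real.exp (-2 * Ψ y) - 1) = Real.exp (-2 * Ψ y) := by ring
      rw [hden, div_eq_iff hne]
      linear_combination he
    rw [h1]
    ring
  intro x μ
  set E := Real.exp (2 * Ψ x) with hE
  have hβE : (1 + β x) * E = 1 := by
    rw [hβ, hE]
    have h2 : Real.exp (-2 * Ψ x) * Real.exp (2 * Ψ x) = 1 := by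
      rw [← Real.exp_add]; norm_num
    linear_combination h2
  have dF : ∀ y, DifferentiableAt ℝ (fun z => 1 - Real.exp (2 * Ψ z)) y := by
    intro y
    exact (differentiableAt_const 1).sub (((dΨ y).const_mul 2)).exp
  have pdg : ∀ σ ρ τ, pd σ (fun y => gcov y ρ τ) x
      = 2 * E * pd σ Ψ x * (vlow ρ x * vlow τ x)
        - (1 - E) * (pd σ (vlow ρ) x * vlow τ x + vlow ρ x * pd σ (vlow τ) x) := by
    intro σ ρ τ
    rw [hgfun, pd_const_sub, pd_mul (dF x) ((dvlow ρ x).fun_mul (dvlow τ x)),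
        pd_mul (dvlow ρ x) (dvlow τ x), pd_const_sub,
        pd_exp ((dΨ x).const_mul 2), pd_const_mul 2 (dΨ x)]
    rw [← hE]
    ring
  have hn := hnorm x
  rw [Fin.sum_univ_four] at hn
  simp only [Fin.sum_univ_four, η_00, η_01, η_02, η_03, η_10, η_11, η_12, η_13, η_20, η_21, η_22, η_23, η_30, η_31, η_32, η_33] at hn
  have hsv : ∑ ε, vlow ε x * v ε x = 1 := by
    rw [Fin.sum_univ_four]
    simp only [hvlowfun, η_00, η_01, η_02, η_03, η_10, η_11, η_12, η_13, η_20, η_21, η_22, η_23, η_30, η_31, η_32, η_33]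
    linarith [hn]
  have hs : ∑ ρ, v ρ x * vlow ρ x = 1 := by
    rw [Fin.sum_univ_four]
    simp only [hvlowfun, η_00, η_01, η_02, η_03, η_10, η_11, η_12, η_13, η_20, η_21, η_22, η_23, η_30, η_31, η_32, η_33]
    linarith [hn]
  have Kzero : ∀ σ, ∑ ρ, v ρ x * pd σ (vlow ρ) x = 0 := by
    intro σ
    have hfun : (fun y => v 0 y * v 0 y - v 1 y * v 1 y - v 2 y * v 2 y - v 3 y * v 3 y)
        = fun _ => (1 : ℝ) := by
      funext y
      have hny := hnorm y
      rw [Fin.sum_univ_four] at hny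
      simp only [Fin.sum_univ_four, η_00, η_01, η_02, η_03, η_10, η_11, η_12, η_13, η_20, η_21, η_22, η_23, η_30, η_31, η_32, η_33] at hny
      linarith [hny]
    have h0 : pd σ (fun y => v 0 y * v 0 y - v 1 y * v 1 y - v 2 y * v 2 y - v 3 y * v 3 y) x
        = 0 := by
      rw [hfun]
      exact pd_const σ 1 x
    rw [pd_quad (v 0) (v 1) (v 2) (v 3) (dv 0 x) (dv 1 x) (dv 2 x) (dv 3 x)] at h0
    rw [Fin.sum_univ_four]
    simp only [pdvlow, η_00, η_01, η_02, η_03, η_10, η_11, η_12, η_13, η_20, η_21, η_22, η_23, η_30, η_31, η_32, η_33]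
    linarith [h0]
  have hδ : ∀ ρ, ∑ ε, vlow ε x * η ε ρ = v ρ x := by
    intro ρ
    rw [Fin.sum_univ_four]
    simp only [hvlowfun]
    fin_cases ρ <;> simp [η_00, η_01, η_02, η_03, η_10, η_11, η_12, η_13, η_20, η_21, η_22, η_23, η_30, η_31, η_32, η_33]
  have B1 : ∀ ρ, ∑ ε, vlow ε x * ghat x ε ρ = (1 + β x) * v ρ x := by
    intro ρ
    simp only [hghat]
    have split : ∑ ε, vlow ε x * (η ε ρ + β x * v ε x * v ρ x)
        = (∑ ε, vlow ε x * η ε ρ) + β x * v ρ x * (∑ ε, vlow ε x * v ε x) := by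
      rw [Finset.mul_sum, ← Finset.sum_add_distrib]
      exact Finset.sum_congr rfl fun ε _ => by ring
    rw [split, hδ ρ, hsv]
    ring
  have gsym : ∀ a b, (fun y => gcov y a b) = (fun y => gcov y b a) := by
    intro a b
    funext y
    have hsymη : η a b = η b a := by
      unfold η
      by_cases h : a = b
      · subst h; rfl
      · simp [h, Ne.symm h]
    rw [hgcov, hgcov, hsymη]
    ring
  have hΓ : ∀ ν, ∑ ε, christoffel ghat gcov x ε μ ν * vlow ε x
      = (1 / 2) * ((1 + β x) * ∑ ρ, v ρ x *
          (pd ν (fun y => gcov y ρ μ) x + pd μ (fun y => gcov y ρ ν) x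
            - pd ρ (fun y => gcov y μ ν) x)) := by
    intro ν
    unfold christoffel
    calc ∑ ε, ((1 / 2 : ℝ) * ∑ ρ, ghat x ε ρ *
            (pd ν (fun y => gcov y ρ μ) x + pd μ (fun y => gcov y ρ ν) x
              - pd ρ (fun y => gcov y μ ν) x)) * vlow ε x
        = ∑ ρ, ∑ ε, (1 / 2) * (vlow ε x * ghat x ε ρ) *
            (pd ν (fun y => gcov y ρ μ) x + pd μ (fun y => gcov y ρ ν) x
              - pd ρ (fun y => gcov y μ ν) x) := by
          simp only [Finset.sum_mul, Finset.mul_sum]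
          rw [Finset.sum_comm]
          exact Finset.sum_congr rfl fun ρ _ => Finset.sum_congr rfl fun ε _ => by ring
      _ = ∑ ρ, (1 / 2) * ((1 + β x) * v ρ x) *
            (pd ν (fun y => gcov y ρ μ) x + pd μ (fun y => gcov y ρ ν) x
              - pd ρ (fun y => gcov y μ ν) x) := by
          refine Finset.sum_congr rfl fun ρ _ => ?_
          rw [show ∑ ε, (1 / 2 : ℝ) * (vlow ε x * ghat x ε ρ) *
              (pd ν (fun y => gcov y ρ μ) x + pd μ (fun y => gcov y ρ ν) x
                - pd ρ (fun y => gcov y μ ν) x)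
            = (1 / 2) * (∑ ε, vlow ε x * ghat x ε ρ) *
              (pd ν (fun y => gcov y ρ μ) x + pd μ (fun y => gcov y ρ ν) x
                - pd ρ (fun y => gcov y μ ν) x) from by
              rw [Finset.mul_sum, Finset.sum_mul]]
          rw [B1 ρ]
      _ = (1 / 2) * ((1 + β x) * ∑ ρ, v ρ x *
            (pd ν (fun y => gcov y ρ μ) x + pd μ (fun y => gcov y ρ ν) x
              - pd ρ (fun y => gcov y μ ν) x)) := by
          rw [Finset.mul_sum, Finset.mul_sum]
          exact Finset.sum_congr rfl fun ρ _ => by ring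
  have S1 : ∑ ν, ∑ ρ, v ν x * (v ρ x * pd ν (fun y => gcov y ρ μ) x)
      = ∑ ν, ∑ ρ, v ν x * (v ρ x * pd ρ (fun y => gcov y μ ν) x) := by
    rw [Finset.sum_comm]
    refine Finset.sum_congr rfl fun a _ => Finset.sum_congr rfl fun b _ => ?_
    rw [show (fun y => gcov y a μ) = (fun y => gcov y μ a) from gsym a μ]
    ring
  have S2 : ∑ ν, ∑ ρ, v ν x * (v ρ x * pd μ (fun y => gcov y ρ ν) x)
      = 2 * E * pd μ Ψ x := by
    simp only [pdg]
    have hK := Kzero μ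
    rw [Fin.sum_univ_four] at hK hs
    simp only [Fin.sum_univ_four]
    set s := v 0 x * vlow 0 x + v 1 x * vlow 1 x + v 2 x * vlow 2 x + v 3 x * vlow 3 x with hsdef
    set K := v 0 x * pd μ (vlow 0) x + v 1 x * pd μ (vlow 1) x + v 2 x * pd μ (vlow 2) x
      + v 3 x * pd μ (vlow 3) x with hKdef
    linear_combination (2 * E * pd μ Ψ x * (s + 1)) * hs - 2 * (1 - E) * s * hK
  simp only [mul_sub]
  rw [Finset.sum_sub_distrib, hacc μ x]
  simp only [hΓ]
  have expand : ∑ ν, v ν x * ((1 / 2) * ((1 + β x) * ∑ ρ, v ρ x *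
        (pd ν (fun y => gcov y ρ μ) x + pd μ (fun y => gcov y ρ ν) x
          - pd ρ (fun y => gcov y μ ν) x)))
      = (1 / 2) * (1 + β x) * ∑ ν, ∑ ρ,
          (v ν x * (v ρ x * pd ν (fun y => gcov y ρ μ) x)
            + v ν x * (v ρ x * pd μ (fun y => gcov y ρ ν) x)
            - v ν x * (v ρ x * pd ρ (fun y => gcov y μ ν) x)) := by
    simp only [Finset.mul_sum]
    exact Finset.sum_congr rfl fun ν _ => Finset.sum_congr rfl fun ρ _ => by ring
  rw [expand]
  simp only [Finset.sum_add_distrib, Finset.sum_sub_distrib]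
  rw [S1, S2]
  linear_combination (-(pd μ Ψ x)) * hβE
end
end

section
/- Let v, l ∈ ℝ⁴ satisfy η_{μν} v^μ v^ν = 1, η_{μν} l^μ l^ν = −1 and η_{μν} v^μ l^ν = 0, and let μ₀, ε, ε′, E be real numbers with ε ≠ 0. Set ξ := ε′E/ε and assume 1 + ξ ≠ 0 and μ₀ ε (1+ξ) ≠ 0. Then the effective metric of a nonlinear dielectric, ĝ^{μν} := η^{μν} + (μ₀ε − 1 + μ₀ε′E) v^μ v^ν − (ε′E/ε) l^μ l^ν, has as its matrix inverse ĝ_{μν} = η_{μν} − (1 − 1/(μ₀ε(1+ξ))) v_μ v_ν + (ξ/(1+ξ)) l_μ l_ν; that is, ĝ^{μα} ĝ_{αν} = δ^μ_ν. -/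
/-! On the η-orthogonal complement of `v` and `l` both metrics act as `η`, while on `v` and `l`
they act as `η` rescaled by `1 + a` and `1 + b` (the sign of `⟨l, l⟩ = -1` turns `- b l l` into a
rescaling by `1 + b`) and by `1 - c` and `1 - d` respectively. The product is therefore the
identity as soon as `(1 + a)(1 - c) = 1` and `(1 + b)(1 - d) = 1`; for the dielectric,
`1 + a = μ₀ ε (1 + ξ)` and `b = ξ`. -/

open scoped BigOperators

noncomputable section

open Matrix

theorem metric_add_vecMulVec_mul_eq_one {n R : Type*} [Fintype n] [DecidableEq n] [CommRing R]
    {G : Matrix n n R} (hGG : G * G = 1) (hGt : Gᵀ = G)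
    {v l : n → R} (hv : v ⬝ᵥ G *ᵥ v = 1) (hl : l ⬝ᵥ G *ᵥ l = -1) (hvl : v ⬝ᵥ G *ᵥ l = 0)
    {a b c d : R} (hac : (1 + a) * (1 - c) = 1) (hbd : (1 + b) * (1 - d) = 1) :
    (G + a • vecMulVec v v - b • vecMulVec l l) *
        (G - c • vecMulVec (G *ᵥ v) (G *ᵥ v) + d • vecMulVec (G *ᵥ l) (G *ᵥ l)) = 1 := by
  have hvG (x : n → R) : x ᵥ* G = G *ᵥ x := by rw [← vecMul_transpose, hGt]
  have hlv : l ⬝ᵥ G *ᵥ v = 0 := by rw [dotProduct_comm, ← hvG, ← dotProduct_mulVec, hvl]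
  simp only [Matrix.mul_add, Matrix.add_mul, Matrix.mul_sub, Matrix.sub_mul, Matrix.mul_smul,
    Matrix.smul_mul]
  simp only [vecMulVec_mul_vecMulVec, hv, hl, hvl, hlv, one_smul, zero_smul, neg_smul,
    vecMulVec_neg, vecMulVec_zero]
  simp only [hGG, mul_vecMulVec, vecMulVec_mul, mulVec_mulVec, one_mulVec, hvG]
  linear_combination (norm := module) hac • vecMulVec v (G *ᵥ v) - hbd • vecMulVec l (G *ᵥ l)

theorem sum_sum_mul_mul_eq_dotProduct_mulVec {m n R : Type*} [Fintype m] [Fintype n]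
    [CommSemiring R] (M : Matrix m n R) (x : m → R) (y : n → R) :
    ∑ μ, ∑ ν, M μ ν * x μ * y ν = x ⬝ᵥ M *ᵥ y := by
  simp only [dotProduct, mulVec, Finset.mul_sum]
  exact Finset.sum_congr rfl fun _ _ => Finset.sum_congr rfl fun _ _ => by ring

theorem of_η_eq_diagonal : Matrix.of η = diagonal fun μ => if μ = 0 then 1 else -1 := by
  ext μ ν
  by_cases h : μ = ν <;> simp [η, h]

theorem of_η_mul_self : Matrix.of η * Matrix.of η = 1 := by
  rw [of_η_eq_diagonal, diagonal_mul_diagonal, ← diagonal_one]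
  congr 1
  funext μ
  split_ifs <;> norm_num

theorem transpose_of_η : (Matrix.of η)ᵀ = Matrix.of η := by
  rw [of_η_eq_diagonal, diagonal_transpose]

/-- the effective metric of a nonlinear dielectric
ĝ^{μν} = η^{μν} + (μ₀ε − 1 + μ₀ε′E) v^μ v^ν − (ε′E/ε) l^μ l^ν has the stated matrix inverse. -/
theorem dielectric_effective_metric_inverse
    (v l : Fin 4 → ℝ) (μ₀ ε ε' E ξ : ℝ)
    (hε : ε ≠ 0)
    (hξ : ξ = ε' * E / ε)
    (hξ1 : 1 + ξ ≠ 0) (hμεξ : μ₀ * ε * (1 + ξ) ≠ 0)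
    -- normalization and orthogonality
    (hv : ∑ μ, ∑ ν, η μ ν * v μ * v ν = 1)
    (hl : ∑ μ, ∑ ν, η μ ν * l μ * l ν = -1)
    (hvl : ∑ μ, ∑ ν, η μ ν * v μ * l ν = 0)
    -- lowered components
    (vlow llow : Fin 4 → ℝ)
    (hvlow : ∀ μ, vlow μ = ∑ ν, η μ ν * v ν)
    (hllow : ∀ μ, llow μ = ∑ ν, η μ ν * l ν)
    -- the effective metric and the claimed inverse
    (gup gdown : Fin 4 → Fin 4 → ℝ)
    (hgup : ∀ μ ν, gup μ ν =
      η μ ν + (μ₀ * ε - 1 + μ₀ * ε' * E) * v μ * v ν - (ε' * E / ε) * l μ * l ν)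
    (hgdown : ∀ μ ν, gdown μ ν =
      η μ ν - (1 - 1 / (μ₀ * ε * (1 + ξ))) * vlow μ * vlow ν
        + (ξ / (1 + ξ)) * llow μ * llow ν) :
    ∀ μ ν, ∑ α, gup μ α * gdown α ν = if μ = ν then (1 : ℝ) else 0 := by
  have hvlow_eq : vlow = Matrix.of η *ᵥ v := funext hvlow
  have hllow_eq : llow = Matrix.of η *ᵥ l := funext hllow
  have hup : Matrix.of gup = Matrix.of η + (μ₀ * ε - 1 + μ₀ * ε' * E) • vecMulVec v v
      - ξ • vecMulVec l l := by
    ext μ ν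
    simp [hgup, hξ, vecMulVec_apply, mul_assoc]
  have hdown : Matrix.of gdown = Matrix.of η - (1 - 1 / (μ₀ * ε * (1 + ξ))) • vecMulVec vlow vlow
      + (ξ / (1 + ξ)) • vecMulVec llow llow := by
    ext μ ν
    simp [hgdown, vecMulVec_apply, mul_assoc]
  have hεξ : ε' * E = ξ * ε := by rw [hξ]; field_simp
  have hac : (1 + (μ₀ * ε - 1 + μ₀ * ε' * E)) * (1 - (1 - 1 / (μ₀ * ε * (1 + ξ)))) = 1 := by
    rw [show 1 + (μ₀ * ε - 1 + μ₀ * ε' * E) = μ₀ * ε * (1 + ξ) by linear_combination μ₀ * hεξ,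
      sub_sub_cancel, mul_one_div_cancel hμεξ]
  have hbd : (1 + ξ) * (1 - ξ / (1 + ξ)) = 1 := by
    field_simp
    ring
  have hinv := metric_add_vecMulVec_mul_eq_one of_η_mul_self transpose_of_η
    ((sum_sum_mul_mul_eq_dotProduct_mulVec _ _ _).symm.trans hv)
    ((sum_sum_mul_mul_eq_dotProduct_mulVec _ _ _).symm.trans hl)
    ((sum_sum_mul_mul_eq_dotProduct_mulVec _ _ _).symm.trans hvl) hac hbd
  rw [← hvlow_eq, ← hllow_eq, ← hup, ← hdown] at hinv
  intro μ ν
  simpa [Matrix.mul_apply, Matrix.one_apply] using congrFun (congrFun hinv μ) ν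
end
end

section
/- Let v : ℝ⁴ → ℝ⁴ be a smooth vector field with η_{μν} v^μ v^ν = 1, and β : ℝ⁴ → ℝ smooth with 1 + β > 0 everywhere. Consider the dragged metric ĝ^{μν} := η^{μν} + β v^μ v^ν. Then: (a) its matrix inverse is ĝ_{μν} = η_{μν} − (β/(1+β)) v_μ v_ν; (b) det(ĝ_{μν}) = −1/(1+β), so that √(−ĝ) := √(−det ĝ_{μν}) = (1+β)^{−1/2}; and (c) with v̂^μ := √(1+β) v^μ (the ĝ-normalized velocity), the expansion in the dragged metric satisfies θ̂ := (1/√(−ĝ)) ∂_μ(√(−ĝ) v̂^μ) = √(1+β) · θ, where θ := ∂_μ v^μ is the flat-space expansion. -/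
open scoped BigOperators
open Matrix

set_option maxHeartbeats 1000000

noncomputable section

/-- properties of the dragged metric ĝ^{μν} = η^{μν} + β v^μ v^ν:
(a) explicit inverse, (b) determinant and √(−ĝ), (c) expansion scaling θ̂ = √(1+β) θ. -/
theorem dragged_metric_inverse_det_expansion
    (v : Fin 4 → (Fin 4 → ℝ) → ℝ) (β : (Fin 4 → ℝ) → ℝ)
    (hv : ∀ μ, ContDiff ℝ (⊤ : ℕ∞) (v μ)) (hβ : ContDiff ℝ (⊤ : ℕ∞) β)
    (hβpos : ∀ x, 0 < 1 + β x)
    (hnorm : ∀ x, ∑ μ, ∑ ν, η μ ν * v μ x * v ν x = 1)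
    -- lowered components v_μ = η_{μν} v^ν
    (vlow : Fin 4 → (Fin 4 → ℝ) → ℝ)
    (hvlow : ∀ μ x, vlow μ x = ∑ ν, η μ ν * v ν x)
    -- the dragged metric and its claimed covariant components
    (ghat gdown : (Fin 4 → ℝ) → Fin 4 → Fin 4 → ℝ)
    (hghat : ∀ x μ ν, ghat x μ ν = η μ ν + β x * v μ x * v ν x)
    (hgdown : ∀ x μ ν, gdown x μ ν = η μ ν - (β x / (1 + β x)) * vlow μ x * vlow ν x)
    -- √(−ĝ) := √(−det ĝ_{μν})
    (sq : (Fin 4 → ℝ) → ℝ)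
    (hsq : ∀ x, sq x = Real.sqrt (-(Matrix.of (gdown x)).det))
    -- ĝ-normalized velocity v̂^μ = √(1+β) v^μ
    (vhat : Fin 4 → (Fin 4 → ℝ) → ℝ)
    (hvhat : ∀ μ x, vhat μ x = Real.sqrt (1 + β x) * v μ x) :
    -- (a) inverse
    (∀ x μ ν, ∑ α, ghat x μ α * gdown x α ν = if μ = ν then (1 : ℝ) else 0) ∧
    -- (b) determinant and √(−ĝ)
    (∀ x, (Matrix.of (gdown x)).det = -1 / (1 + β x)) ∧
    (∀ x, sq x = 1 / Real.sqrt (1 + β x)) ∧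
    -- (c) θ̂ = (1/√(−ĝ)) ∂_μ(√(−ĝ) v̂^μ) = √(1+β) θ, with θ = ∂_μ v^μ
    (∀ x, (1 / sq x) * ∑ μ, pd μ (fun y => sq y * vhat μ y) x =
      Real.sqrt (1 + β x) * ∑ μ, pd μ (v μ) x) := by

  -- preliminaries
  have hne : ∀ x, (1 + β x) ≠ 0 := fun x => ne_of_gt (hβpos x)
  have hn : ∀ x, v 0 x * v 0 x - v 1 x * v 1 x - v 2 x * v 2 x - v 3 x * v 3 x = 1 := by
    intro x; have h := hnorm x
    simp [Fin.sum_univ_four, η] at h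
    linarith
  have hl : ∀ μ x, vlow μ x = if μ = 0 then v 0 x else -(v μ x) := by
    intro μ x; fin_cases μ <;> simp [hvlow, Fin.sum_univ_four, η]
  -- (a) inverse
  have hinv : ∀ x μ ν, ∑ α, ghat x μ α * gdown x α ν = if μ = ν then (1 : ℝ) else 0 := by
    intro x μ ν
    have S1 : ∑ α, η μ α * η α ν = if μ = ν then (1:ℝ) else 0 := by
      fin_cases μ <;> fin_cases ν <;> simp [Fin.sum_univ_four, η]
    have S2 : ∑ α, η μ α * vlow α x = v μ x := by
      fin_cases μ <;> simp [Fin.sum_univ_four, η, hl]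
    have S3 : ∑ α, η α ν * v α x = vlow ν x := by
      fin_cases ν <;> simp [Fin.sum_univ_four, η, hl]
    have S4 : ∑ α, v α x * vlow α x = 1 := by
      simp [Fin.sum_univ_four, hl]
      linarith [hn x]
    have expand : ∀ α, ghat x μ α * gdown x α ν =
        η μ α * η α ν - (β x / (1 + β x)) * vlow ν x * (η μ α * vlow α x)
        + β x * v μ x * (η α ν * v α x)
        - β x * (β x / (1 + β x)) * v μ x * vlow ν x * (v α x * vlow α x) := by
      intro α; rw [hghat, hgdown]; ring
    rw [Finset.sum_congr rfl (fun α _ => expand α)]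
    simp only [Finset.sum_sub_distrib, Finset.sum_add_distrib, ← Finset.mul_sum]
    rw [S1, S2, S3, S4]
    by_cases h : μ = ν <;> simp only [h, if_true, if_false] <;> field_simp [hne x] <;> ring
  -- (b) determinant
  have hdet : ∀ x, (Matrix.of (gdown x)).det = -1 / (1 + β x) := by
    intro x
    have hM : Matrix.of (gdown x) =
        !![1 - β x * (1 + β x)⁻¹ * v 0 x * v 0 x, β x * (1 + β x)⁻¹ * v 0 x * v 1 x,
             β x * (1 + β x)⁻¹ * v 0 x * v 2 x, β x * (1 + β x)⁻¹ * v 0 x * v 3 x;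
           β x * (1 + β x)⁻¹ * v 0 x * v 1 x, -1 - β x * (1 + β x)⁻¹ * v 1 x * v 1 x,
             -(β x * (1 + β x)⁻¹ * v 1 x * v 2 x), -(β x * (1 + β x)⁻¹ * v 1 x * v 3 x);
           β x * (1 + β x)⁻¹ * v 0 x * v 2 x, -(β x * (1 + β x)⁻¹ * v 1 x * v 2 x),
             -1 - β x * (1 + β x)⁻¹ * v 2 x * v 2 x, -(β x * (1 + β x)⁻¹ * v 2 x * v 3 x);
           β x * (1 + β x)⁻¹ * v 0 x * v 3 x, -(β x * (1 + β x)⁻¹ * v 1 x * v 3 x),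
             -(β x * (1 + β x)⁻¹ * v 2 x * v 3 x), -1 - β x * (1 + β x)⁻¹ * v 3 x * v 3 x] := by
      ext μ ν
      fin_cases μ <;> fin_cases ν <;>
        (try simp [hgdown, hl, η, div_eq_mul_inv]) <;> try ring
    rw [hM]
    have hd : (1 + β x) * (1 + β x)⁻¹ = 1 := mul_inv_cancel₀ (hne x)
    simp [Matrix.det_succ_row_zero, Fin.sum_univ_succ, Fin.succAbove,
      Fin.castSucc, Fin.castAdd, Fin.castLE]
    linear_combination (β x * (1 + β x)⁻¹) * hn x + hd

  -- √(−ĝ)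
  have hsq' : ∀ x, sq x = 1 / Real.sqrt (1 + β x) := by
    intro x
    rw [hsq, hdet]
    rw [show -(-1 / (1 + β x)) = (1 + β x)⁻¹ by field_simp]
    rw [Real.sqrt_inv, one_div]
  -- (c)
  have hβsqrt : ∀ x, Real.sqrt (1 + β x) ≠ 0 :=
    fun x => ne_of_gt (Real.sqrt_pos.mpr (hβpos x))
  have hkey : ∀ μ, (fun y => sq y * vhat μ y) = v μ := by
    intro μ; funext y
    rw [hsq' y, hvhat]
    rw [one_div, inv_mul_cancel_left₀ (hβsqrt y)]
  refine ⟨hinv, hdet, hsq', ?_⟩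
  intro x
  simp only [hkey, hsq' x, one_div_one_div]
end
end

section
/- Let v, E, e, h, k ∈ ℝ⁴ and let ε, ε′, μ₀ be real numbers with ε ≠ 0 and μ₀ ≠ 0. Assume η_{μν}v^μv^ν = 1, η_{μν}E^μv^ν = 0, and Ē := √(−η_{μν}E^μE^ν) > 0. Suppose the Hadamard discontinuity relations of the nonlinear-dielectric Maxwell equations hold: (i) ε k^α e_α − (ε′/Ē) (E^α e_α)(E^β k_β) = 0; (ii) μ₀ h^α k_α = 0; (iii) ε (k^α v_α) e^μ − (ε′/Ē)(E^λ e_λ)(k^α v_α) E^μ + η^{μναβ} k_ν v_α h_β = 0 for all μ; (iv) μ₀ (k_α v^α) h^λ − η^{λβρσ} k_β v_ρ e_σ = 0 for all λ. If moreover E^α e_α ≠ 0 and k^α v_α ≠ 0, then the wave vector satisfies the effective-metric dispersion relation: ( η^{μν} + (μ₀ε − 1 + μ₀ε′Ē) v^μ v^ν − (ε′/(εĒ)) E^μ E^ν ) k_μ k_ν = 0. -/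
open scoped BigOperators

noncomputable section

/-- The Levi-Civita symbol ε_{abcd} on four indices, with ε₀₁₂₃ = 1. -/
def lc (a b c d : Fin 4) : ℝ :=
  ∑ σ : Equiv.Perm (Fin 4),
    if σ 0 = a ∧ σ 1 = b ∧ σ 2 = c ∧ σ 3 = d then ((Equiv.Perm.sign σ : ℤ) : ℝ) else 0

/-- Fully contravariant Levi-Civita tensor η^{μναβ}: all indices of ε raised with η. -/
def lcup (μ ν a b : Fin 4) : ℝ :=
  ∑ p, ∑ q, ∑ r, ∑ s, η μ p * η ν q * η a r * η b s * lc p q r s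

/-- Minkowski scalar product of two (contravariant) four-vectors. -/
def mdot (u w : Fin 4 → ℝ) : ℝ := ∑ μ, ∑ ν, η μ ν * u μ * w ν

/-!
Write `⋆(a, b, c)` (`hodgeDual a b c`) for the vector `η^{μναβ} a_ν b_α c_β`, so that `w · ⋆(a, b, c) = det (w, a, b, c)`.
Contracting (iii) with `v` gives `v · e = 0`, and contracting it with `E` expresses
`E · ⋆(k, v, h)` through `k · v` and `E · e`. Contracting (iv) with `⋆(E, k, v)` expresses the same
quantity through `⋆(k, v, e) · ⋆(E, k, v)`, which the Lorentzian contraction identity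
`⋆(a, b, c) · ⋆(d, f, g) = - det (Gram matrix)` turns into scalar products of `k, v, e, E`.
Eliminating it and using (i) for `k · e` leaves `E · e` times the dispersion relation.
-/

lemma η_symm (μ ν : Fin 4) : η μ ν = η ν μ := by
  unfold η; split_ifs <;> simp_all

lemma η_mul_self (μ : Fin 4) : η μ μ * η μ μ = 1 := by
  simp only [η]; split_ifs <;> norm_num

lemma sum_η_mul (μ : Fin 4) (f : Fin 4 → ℝ) : ∑ ρ, η μ ρ * f ρ = η μ μ * f μ :=
  Finset.sum_eq_single μ (fun ρ _ hρ => by simp [η, Ne.symm hρ]) (by simp)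

lemma mdot_eq_sum_diag (u w : Fin 4 → ℝ) : mdot u w = ∑ μ, η μ μ * u μ * w μ := by
  refine Finset.sum_congr rfl fun μ _ => ?_
  simpa [mul_comm, mul_left_comm, mul_assoc] using sum_η_mul μ (fun ν => u μ * w ν)

lemma mdot_eq_coords (u w : Fin 4 → ℝ) :
    mdot u w = u 0 * w 0 - u 1 * w 1 - u 2 * w 2 - u 3 * w 3 := by
  simp only [mdot_eq_sum_diag, η, ↓reduceIte, Fin.isValue, ite_mul, one_mul, neg_mul,
    Fin.sum_univ_four, one_ne_zero, Fin.reduceEq]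
  ring

lemma mdot_comm (u w : Fin 4 → ℝ) : mdot u w = mdot w u := by
  rw [mdot, mdot, Finset.sum_comm]
  exact Finset.sum_congr rfl fun _ _ => Finset.sum_congr rfl fun _ _ => by rw [η_symm]; ring

lemma mdot_eq_toBilin' (u w : Fin 4 → ℝ) : mdot u w = Matrix.toBilin' (Matrix.of η) u w := by
  simp only [mdot, Matrix.toBilin'_apply, Matrix.of_apply]
  exact Finset.sum_congr rfl fun _ _ => Finset.sum_congr rfl fun _ _ => by ring

lemma mdot_add_right (w x y : Fin 4 → ℝ) : mdot w (x + y) = mdot w x + mdot w y := by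
  simp only [mdot_eq_toBilin', map_add]

lemma mdot_sub_right (w x y : Fin 4 → ℝ) : mdot w (x - y) = mdot w x - mdot w y := by
  simp only [mdot_eq_toBilin', map_sub]

lemma mdot_smul_right (w x : Fin 4 → ℝ) (t : ℝ) : mdot w (t • x) = t * mdot w x := by
  simp only [mdot_eq_toBilin', map_smul, smul_eq_mul]

lemma mdot_zero_right (w : Fin 4 → ℝ) : mdot w 0 = 0 := by
  simp only [mdot_eq_toBilin', map_zero]

lemma sum_lc_mul (F : Fin 4 → Fin 4 → Fin 4 → Fin 4 → ℝ) :
    ∑ p, ∑ q, ∑ r, ∑ s, lc p q r s * F p q r s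
      = ∑ σ : Equiv.Perm (Fin 4), (Equiv.Perm.sign σ : ℝ) * F (σ 0) (σ 1) (σ 2) (σ 3) := by
  simp only [lc, Finset.sum_mul, ite_mul, zero_mul]
  simp only [Finset.sum_comm (t := (Finset.univ : Finset (Equiv.Perm (Fin 4))))]
  refine Finset.sum_congr rfl fun σ _ => ?_
  simp [ite_and, Finset.sum_ite_irrel]

lemma sum_lc_mul_eq_det (w a b c : Fin 4 → ℝ) :
    ∑ p, ∑ q, ∑ r, ∑ s, lc p q r s * (w p * a q * b r * c s) = (Matrix.of ![w, a, b, c]).det := by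
  rw [sum_lc_mul, ← Matrix.det_transpose, Matrix.det_apply']
  simp [Fin.prod_univ_four, mul_assoc]

def lower (u : Fin 4 → ℝ) (ν : Fin 4) : ℝ := ∑ ρ, η ν ρ * u ρ

lemma lower_apply (u : Fin 4 → ℝ) (ν : Fin 4) : lower u ν = η ν ν * u ν := sum_η_mul ν u

lemma sum_effectiveMetric_mul_lower_mul_lower (u w k : Fin 4 → ℝ) (α β : ℝ) :
    ∑ μ, ∑ ν, (η μ ν + α * u μ * u ν - β * w μ * w ν) * lower k μ * lower k ν
      = mdot k k + α * mdot k u ^ 2 - β * mdot k w ^ 2 := by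
  simp only [η, lower_apply, mdot_eq_sum_diag, Fin.sum_univ_four, Fin.isValue, ↓reduceIte, ite_mul,
    mul_ite, one_mul, neg_mul, mul_neg, Fin.reduceEq, one_ne_zero, zero_ne_one, zero_add, neg_neg]
  ring

def hodgeDual (a b c : Fin 4 → ℝ) (μ : Fin 4) : ℝ :=
  ∑ ν, ∑ α, ∑ β, lcup μ ν α β * lower a ν * lower b α * lower c β

lemma lcup_eq (μ ν α β : Fin 4) :
    lcup μ ν α β = η μ μ * η ν ν * η α α * η β β * lc μ ν α β := by
  simp only [lcup, mul_assoc, ← Finset.mul_sum, sum_η_mul]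

lemma hodgeDual_apply (a b c : Fin 4 → ℝ) (μ : Fin 4) :
    hodgeDual a b c μ = η μ μ * ∑ ν, ∑ α, ∑ β, lc μ ν α β * (a ν * b α * c β) := by
  simp only [hodgeDual, lcup_eq, lower_apply, Finset.mul_sum]
  refine Finset.sum_congr rfl fun ν _ => Finset.sum_congr rfl fun α _ =>
    Finset.sum_congr rfl fun β _ => ?_
  linear_combination (η μ μ * lc μ ν α β * a ν * b α * c β) *
    (η α α * η α α * η β β * η β β * η_mul_self ν + η β β * η β β * η_mul_self α + η_mul_self β)

lemma mdot_hodgeDual (w a b c : Fin 4 → ℝ) :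
    mdot w (hodgeDual a b c) = (Matrix.of ![w, a, b, c]).det := by
  rw [← sum_lc_mul_eq_det, mdot_eq_sum_diag]
  refine Finset.sum_congr rfl fun μ _ => ?_
  calc η μ μ * w μ * hodgeDual a b c μ
      = w μ * ∑ ν, ∑ α, ∑ β, lc μ ν α β * (a ν * b α * c β) := by
        rw [hodgeDual_apply]
        linear_combination (w μ * ∑ ν, ∑ α, ∑ β, lc μ ν α β * (a ν * b α * c β)) * η_mul_self μ
    _ = _ := by
        simp only [Finset.mul_sum]
        exact Finset.sum_congr rfl fun _ _ => Finset.sum_congr rfl fun _ _ =>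
          Finset.sum_congr rfl fun _ _ => by ring

lemma mdot_hodgeDual_self_mid (a b c : Fin 4 → ℝ) : mdot b (hodgeDual a b c) = 0 := by
  rw [mdot_hodgeDual]
  exact Matrix.det_zero_of_row_eq (i := 0) (j := 2) (by decide) rfl

lemma mdot_hodgeDual_rotate (w a b c : Fin 4 → ℝ) :
    mdot w (hodgeDual a b c) = - mdot a (hodgeDual b c w) := by
  have hrot : Matrix.of ![a, b, c, w] = (Matrix.of ![w, a, b, c]).submatrix (finRotate 4) id := by
    ext i j; fin_cases i <;> rfl
  rw [mdot_hodgeDual, mdot_hodgeDual, hrot, Matrix.det_permute, sign_finRotate]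
  norm_num

lemma hodgeDual_eq_det (a b c : Fin 4 → ℝ) (μ : Fin 4) :
    hodgeDual a b c μ = (Matrix.of ![Pi.single μ (η μ μ), a, b, c]).det := by
  rw [← mdot_hodgeDual, mdot_eq_sum_diag, Finset.sum_eq_single μ (fun ν _ hν => by simp [hν])
    (by simp), Pi.single_eq_same, η_mul_self, one_mul]

lemma hodgeDual_eq (a b c : Fin 4 → ℝ) : hodgeDual a b c = ![
    a 1 * (b 2 * c 3 - b 3 * c 2) - a 2 * (b 1 * c 3 - b 3 * c 1) + a 3 * (b 1 * c 2 - b 2 * c 1),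
    a 0 * (b 2 * c 3 - b 3 * c 2) - a 2 * (b 0 * c 3 - b 3 * c 0) + a 3 * (b 0 * c 2 - b 2 * c 0),
    a 1 * (b 0 * c 3 - b 3 * c 0) - a 0 * (b 1 * c 3 - b 3 * c 1) - a 3 * (b 0 * c 1 - b 1 * c 0),
    a 0 * (b 1 * c 2 - b 2 * c 1) - a 1 * (b 0 * c 2 - b 2 * c 0) + a 2 * (b 0 * c 1 - b 1 * c 0)] := by
  funext μ
  fin_cases μ <;>
    simp [hodgeDual_eq_det, Matrix.det_succ_row_zero, Fin.sum_univ_succ, Fin.succAbove, η] <;> ring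

lemma mdot_hodgeDual_hodgeDual (a b c d f g : Fin 4 → ℝ) :
    mdot (hodgeDual a b c) (hodgeDual d f g) = - !![mdot a d, mdot a f, mdot a g;
      mdot b d, mdot b f, mdot b g; mdot c d, mdot c f, mdot c g].det := by
  simp only [Matrix.det_fin_three, Matrix.of_apply, mdot_eq_coords, hodgeDual_eq, Fin.isValue,
    Matrix.cons_val', Matrix.cons_val_zero, Matrix.cons_val_one, Matrix.cons_val, Matrix.cons_val_fin_one]
  ring

lemma mdot_hodgeDual_hodgeDual_of_orthogonal (a b u c : Fin 4 → ℝ) (hu : mdot u u = 1)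
    (hau : mdot a u = 0) (huc : mdot u c = 0) :
    mdot (hodgeDual a b u) (hodgeDual b u c)
      = mdot a c * (mdot b u ^ 2 - mdot b b) + mdot a b * mdot b c := by
  rw [mdot_hodgeDual_hodgeDual, Matrix.det_fin_three]
  simp only [Matrix.of_apply, Matrix.cons_val', Matrix.cons_val_zero, Matrix.cons_val_one,
    Matrix.cons_val, Matrix.cons_val_fin_one, mdot_comm u b, hu, hau, huc]
  ring

theorem nonlinear_dielectric_dispersion_general
    (v E e h k : Fin 4 → ℝ) (ε ε' μ₀ Ebar : ℝ)
    (hε : ε ≠ 0)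
    (hvn : mdot v v = 1) (hEv : mdot E v = 0)
    (hEbar : Ebar = Real.sqrt (- mdot E E)) (hEbarpos : 0 < Ebar)
    -- (i)
    (h1 : ε * mdot k e - (ε' / Ebar) * mdot E e * mdot E k = 0)
    -- (iii)
    (h3 : ∀ μ, ε * mdot k v * e μ - (ε' / Ebar) * mdot E e * mdot k v * E μ
        + (∑ ν, ∑ a, ∑ b, lcup μ ν a b *
            (∑ ρ, η ν ρ * k ρ) * (∑ ρ, η a ρ * v ρ) * (∑ ρ, η b ρ * h ρ)) = 0)
    -- (iv)
    (h4 : ∀ l, μ₀ * mdot k v * h l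
        - (∑ b, ∑ r, ∑ s, lcup l b r s *
            (∑ ρ, η b ρ * k ρ) * (∑ ρ, η r ρ * v ρ) * (∑ ρ, η s ρ * e ρ)) = 0)
    (hEe : mdot E e ≠ 0) (hkv : mdot k v ≠ 0) :
    -- the dispersion relation in the effective metric
    ∑ μ, ∑ ν,
      (η μ ν + (μ₀ * ε - 1 + μ₀ * ε' * Ebar) * v μ * v ν
        - (ε' / (ε * Ebar)) * E μ * E ν)
      * (∑ ρ, η μ ρ * k ρ) * (∑ ρ, η ν ρ * k ρ) = 0 := by
  have hEb : Ebar ≠ 0 := hEbarpos.ne'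
  have hEE : mdot E E = -Ebar ^ 2 := by
    rw [hEbar, Real.sq_sqrt (Real.sqrt_pos.mp (hEbar ▸ hEbarpos)).le, neg_neg]
  have hiii : (ε * mdot k v) • e - (ε' / Ebar * mdot E e * mdot k v) • E + hodgeDual k v h = 0 :=
    funext fun μ => by simpa [hodgeDual, lower, mul_assoc] using h3 μ
  have hiv : (μ₀ * mdot k v) • h - hodgeDual k v e = 0 :=
    funext fun l => by simpa [hodgeDual, lower] using h4 l
  have hve : mdot v e = 0 := by
    have hv := congrArg (mdot v) hiii
    simp only [mdot_add_right, mdot_sub_right, mdot_smul_right, mdot_zero_right,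
      mdot_hodgeDual_self_mid, mdot_comm v E, hEv] at hv
    simpa [hε, hkv] using hv
  have hiiiE := congrArg (mdot E) hiii
  simp only [mdot_add_right, mdot_sub_right, mdot_smul_right, mdot_zero_right, hEE] at hiiiE
  have hivStar := congrArg (mdot (hodgeDual E k v)) hiv
  rw [mdot_sub_right, mdot_smul_right, mdot_zero_right, mdot_comm (hodgeDual E k v) h,
    mdot_hodgeDual_rotate h E k v, mdot_hodgeDual_hodgeDual_of_orthogonal E k v e hvn hEv hve] at hivStar
  field_simp at hiiiE h1
  have hdisp : mdot E e * (ε * Ebar * (mdot k k + (μ₀ * ε - 1 + μ₀ * ε' * Ebar) * mdot k v ^ 2)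
      - ε' * mdot E k ^ 2) = 0 := by
    linear_combination (ε * Ebar * μ₀ * mdot k v) * hiiiE + ε * Ebar * hivStar + mdot E k * h1
  refine (sum_effectiveMetric_mul_lower_mul_lower v E k _ _).trans ?_
  rw [mdot_comm k E]
  field_simp
  linear_combination (mul_eq_zero.mp hdisp).resolve_left hEe

/-- the Hadamard discontinuity relations of Maxwell's equations inside a
nonlinear dielectric imply the effective-metric dispersion relation for the wave vector. -/
theorem nonlinear_dielectric_dispersion
    (v E e h k : Fin 4 → ℝ) (ε ε' μ₀ Ebar : ℝ)
    (hε : ε ≠ 0) (hμ₀ : μ₀ ≠ 0)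
    (hvn : mdot v v = 1) (hEv : mdot E v = 0)
    (hEbar : Ebar = Real.sqrt (- mdot E E)) (hEbarpos : 0 < Ebar)
    -- (i)
    (h1 : ε * mdot k e - (ε' / Ebar) * mdot E e * mdot E k = 0)
    -- (ii)
    (h2 : μ₀ * mdot h k = 0)
    -- (iii)
    (h3 : ∀ μ, ε * mdot k v * e μ - (ε' / Ebar) * mdot E e * mdot k v * E μ
        + (∑ ν, ∑ a, ∑ b, lcup μ ν a b *
            (∑ ρ, η ν ρ * k ρ) * (∑ ρ, η a ρ * v ρ) * (∑ ρ, η b ρ * h ρ)) = 0)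
    -- (iv)
    (h4 : ∀ l, μ₀ * mdot k v * h l
        - (∑ b, ∑ r, ∑ s, lcup l b r s *
            (∑ ρ, η b ρ * k ρ) * (∑ ρ, η r ρ * v ρ) * (∑ ρ, η s ρ * e ρ)) = 0)
    (hEe : mdot E e ≠ 0) (hkv : mdot k v ≠ 0) :
    -- the dispersion relation in the effective metric
    ∑ μ, ∑ ν,
      (η μ ν + (μ₀ * ε - 1 + μ₀ * ε' * Ebar) * v μ * v ν
        - (ε' / (ε * Ebar)) * E μ * E ν)
      * (∑ ρ, η μ ρ * k ρ) * (∑ ρ, η ν ρ * k ρ) = 0 :=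
  nonlinear_dielectric_dispersion_general v E e h k ε ε' μ₀ Ebar hε hvn hEv hEbar hEbarpos h1 h3 h4
    hEe hkv
end
end

section
/- Let F_{μν} be a real antisymmetric 4×4 matrix and β ≠ 0 a real number. Set F := F_{μν}F^{μν}, G := F*_{μν}F^{μν}, and U := 1 + F/(2β²) − G²/(16β⁴). Then: (a) det( δ^μ_ν + (1/β) F^μ{}_ν ) = U, and (b) det( δ^μ_ν − (1/β²) F^μ{}_α F^α{}_ν ) = U², where the determinants are of the 4×4 matrices with entries indexed by (μ, ν). -/
open scoped BigOperators

noncomputable section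

/-!
Write the antisymmetric `F` through its electric and magnetic parts `E`, `B`. Raising both
indices flips the sign of `E`, so `F_{μν} F^{μν} = 2 (B² - E²)`, and contracting `ε` against
`F^{αβ} F^{μν}` picks out the Pfaffian, giving `G = 4 E ⬝ B`. Expanding the 4 × 4 determinant
then gives `det (1 + t ηF) = 1 + t² (B² - E²) - t⁴ (E ⬝ B)²`, which is (a) at `t = 1/β`.
For (b), `1 - t² M² = (1 - t M)(1 + t M)`, and `det (1 - t ηF) = det (1 + t ηF)` because
`1 - t ηF = η (η - t F)` and `η - t F` is the transpose of `η + t F`.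
-/

open Equiv Matrix

theorem Equiv.Perm.sum_fin_succ {M : Type*} [AddCommMonoid M] {n : ℕ}
    (g : Perm (Fin (n + 1)) → M) :
    ∑ σ, g σ = ∑ p : Fin (n + 1), ∑ e : Perm (Fin n), g (Perm.decomposeFin.symm (p, e)) := by
  rw [← Fintype.sum_prod_type', Perm.decomposeFin.symm.sum_comp]

theorem Matrix.det_fin_four {R : Type*} [CommRing R] (A : Matrix (Fin 4) (Fin 4) R) :
    A.det =
      A 0 0 * A 1 1 * A 2 2 * A 3 3 - A 0 0 * A 1 1 * A 2 3 * A 3 2 -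
        A 0 0 * A 1 2 * A 2 1 * A 3 3 + A 0 0 * A 1 2 * A 2 3 * A 3 1 +
        A 0 0 * A 1 3 * A 2 1 * A 3 2 - A 0 0 * A 1 3 * A 2 2 * A 3 1 -
        A 0 1 * A 1 0 * A 2 2 * A 3 3 + A 0 1 * A 1 0 * A 2 3 * A 3 2 +
        A 0 1 * A 1 2 * A 2 0 * A 3 3 - A 0 1 * A 1 2 * A 2 3 * A 3 0 -
        A 0 1 * A 1 3 * A 2 0 * A 3 2 + A 0 1 * A 1 3 * A 2 2 * A 3 0 +
        A 0 2 * A 1 0 * A 2 1 * A 3 3 - A 0 2 * A 1 0 * A 2 3 * A 3 1 -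
        A 0 2 * A 1 1 * A 2 0 * A 3 3 + A 0 2 * A 1 1 * A 2 3 * A 3 0 +
        A 0 2 * A 1 3 * A 2 0 * A 3 1 - A 0 2 * A 1 3 * A 2 1 * A 3 0 -
        A 0 3 * A 1 0 * A 2 1 * A 3 2 + A 0 3 * A 1 0 * A 2 2 * A 3 1 +
        A 0 3 * A 1 1 * A 2 0 * A 3 2 - A 0 3 * A 1 1 * A 2 2 * A 3 0 -
        A 0 3 * A 1 2 * A 2 0 * A 3 1 + A 0 3 * A 1 2 * A 2 1 * A 3 0 := by
  rw [det_succ_row_zero]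
  have h1 : (1 : Fin 4).succAbove 2 = 3 := rfl
  have h2 : (2 : Fin 4).succAbove 2 = 3 := rfl
  have h3 : (3 : Fin 4).succAbove 2 = 2 := rfl
  simp only [det_fin_three, submatrix_apply, Fin.sum_univ_succ, Fin.succ_zero_eq_one,
    Fin.succ_one_eq_two, Fin.reduceSucc, Fin.zero_succAbove, Fin.succ_succAbove_zero,
    Fin.succ_succAbove_one, h1, h2, h3, Fin.val_zero, Fin.val_succ, Finset.univ_unique,
    Fin.default_eq_zero, Finset.sum_singleton]
  ring

theorem Matrix.det_one_sub_mul_self {n R : Type*} [Fintype n] [DecidableEq n] [CommRing R]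
    (A : Matrix n n R) : (1 - A * A).det = (1 - A).det * (1 + A).det := by
  rw [← det_mul]
  congr 1
  noncomm_ring

theorem Matrix.det_one_sub_mul_eq_det_one_add_mul {n R : Type*} [Fintype n] [DecidableEq n]
    [CommRing R] {D F : Matrix n n R} (hD : D * D = 1) (hDT : Dᵀ = D) (hF : Fᵀ = -F) :
    (1 - D * F).det = (1 + D * F).det := by
  have hsub : 1 - D * F = D * (D + F)ᵀ := by
    rw [transpose_add, hDT, hF, mul_add, hD, mul_neg, sub_eq_add_neg]
  rw [hsub, ← hD, ← mul_add, det_mul, det_mul, det_transpose]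

/-- The field strength with `F_{0i} = E_i` and `F_{ij} = -ε_{ijk} B_k`. -/
def fieldStrength (E B : Fin 3 → ℝ) : Matrix (Fin 4) (Fin 4) ℝ :=
  !![0, E 0, E 1, E 2; -E 0, 0, -B 2, B 1; -E 1, B 2, 0, -B 0; -E 2, -B 1, B 0, 0]

theorem eq_fieldStrength_of_antisymm {F : Matrix (Fin 4) (Fin 4) ℝ}
    (hF : ∀ μ ν, F μ ν = -F ν μ) :
    F = fieldStrength ![F 0 1, F 0 2, F 0 3] ![-F 2 3, F 1 3, -F 1 2] := by
  have hdiag : ∀ μ, F μ μ = 0 := fun μ => by linarith [hF μ μ]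
  ext μ ν
  fin_cases μ <;> fin_cases ν <;>
    simp [fieldStrength, hdiag, hF 1 0, hF 2 0, hF 3 0, hF 2 1, hF 3 1, hF 3 2]

theorem transpose_fieldStrength (E B : Fin 3 → ℝ) :
    (fieldStrength E B)ᵀ = -fieldStrength E B := by
  ext μ ν
  fin_cases μ <;> fin_cases ν <;> simp [fieldStrength]

theorem eta_mul_eta : of η * of η = 1 := by
  ext μ ν
  fin_cases μ <;> fin_cases ν <;> simp [η, mul_apply]

theorem transpose_eta : (of η)ᵀ = of η := by
  ext μ ν
  fin_cases μ <;> fin_cases ν <;> simp [η]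

theorem sum_eta_mul (μ : Fin 4) (g : Fin 4 → ℝ) : ∑ α, η μ α * g α = η μ μ * g μ :=
  Fintype.sum_eq_single μ fun α hα => by simp [η, Ne.symm hα]

theorem eta_mul_apply (A : Matrix (Fin 4) (Fin 4) ℝ) (μ ν : Fin 4) :
    (of η * A) μ ν = η μ μ * A μ ν :=
  sum_eta_mul μ (A · ν)

theorem raise_fieldStrength (E B : Fin 3 → ℝ) (μ ν : Fin 4) :
    ∑ α, ∑ β, η μ α * η ν β * fieldStrength E B α β = fieldStrength (-E) B μ ν := by
  simp only [mul_assoc, ← Finset.mul_sum, sum_eta_mul]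
  fin_cases μ <;> fin_cases ν <;> simp [η, fieldStrength]

theorem sum_fieldStrength_mul_fieldStrength_neg (E B : Fin 3 → ℝ) :
    ∑ μ, ∑ ν, fieldStrength E B μ ν * fieldStrength (-E) B μ ν = 2 * (B ⬝ᵥ B - E ⬝ᵥ E) := by
  simp only [Fin.sum_univ_four, Fin.sum_univ_three, dotProduct, fieldStrength, of_apply,
    cons_val', cons_val_zero, cons_val_one, cons_val, cons_val_fin_one, Pi.neg_apply]
  ring

theorem sum_lc_mul_eq_sum_perm (f : Fin 4 → Fin 4 → Fin 4 → Fin 4 → ℝ) :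
    ∑ a, ∑ b, ∑ c, ∑ d, lc a b c d * f a b c d =
      ∑ σ : Perm (Fin 4), (Perm.sign σ : ℝ) * f (σ 0) (σ 1) (σ 2) (σ 3) := by
  simp only [lc, Finset.sum_mul, ite_mul, zero_mul, ite_and,
    Finset.sum_comm (t := (Finset.univ : Finset (Perm (Fin 4))))]
  simp

theorem sum_lc_mul_fieldStrength (E B : Fin 3 → ℝ) :
    ∑ μ, ∑ ν, (∑ α, ∑ β, lc μ ν α β * fieldStrength E B α β) * fieldStrength E B μ ν =
      -8 * (E ⬝ᵥ B) := by
  simp only [Finset.sum_mul, mul_assoc]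
  -- In successor form the indices can be evaluated under `Perm.decomposeFin.symm`.
  rw [sum_lc_mul_eq_sum_perm, show (3 : Fin 4) = Fin.succ (Fin.succ (Fin.succ 0)) from rfl,
    show (2 : Fin 4) = Fin.succ (Fin.succ 0) from rfl, show (1 : Fin 4) = Fin.succ 0 from rfl]
  simp only [Perm.sum_fin_succ, Fin.sum_univ_succ, Fin.sum_univ_zero,
    Perm.decomposeFin_symm_apply_zero, Perm.decomposeFin_symm_apply_succ,
    Perm.decomposeFin.symm_sign, swap_apply_def, Fin.succ_ne_zero, Fin.succ_inj, if_true, if_false]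
  simp only [Finset.univ_unique, Finset.sum_singleton, Perm.default_eq, Perm.sign_one,
    Fin.succ_zero_eq_one, Fin.succ_one_eq_two, Fin.reduceSucc, Fin.reduceEq, ↓reduceIte,
    Units.val_mul, Units.val_one, Units.val_neg, Int.cast_mul, Int.cast_one, Int.cast_neg,
    Fin.sum_univ_three, dotProduct, fieldStrength, of_apply, cons_val', cons_val_zero,
    cons_val_one, cons_val, cons_val_fin_one]
  ring

theorem det_one_add_smul_eta_mul_fieldStrength (E B : Fin 3 → ℝ) (t : ℝ) :
    (1 + t • (of η * fieldStrength E B)).det =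
      1 + t ^ 2 * (B ⬝ᵥ B - E ⬝ᵥ E) - t ^ 4 * (E ⬝ᵥ B) ^ 2 := by
  rw [det_fin_four]
  simp only [Matrix.add_apply, Matrix.smul_apply, one_apply, eta_mul_apply, η, Fin.reduceEq,
    ↓reduceIte, smul_eq_mul, Fin.sum_univ_three, dotProduct, fieldStrength, of_apply, cons_val',
    cons_val_zero, cons_val_one, cons_val, cons_val_fin_one]
  ring

theorem born_infeld_determinants_general
    (F : Fin 4 → Fin 4 → ℝ) (hFa : ∀ μ ν, F μ ν = - F ν μ)
    (β : ℝ)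
    -- raised components F^{μν}
    (Fup : Fin 4 → Fin 4 → ℝ)
    (hFup : ∀ μ ν, Fup μ ν = ∑ α, ∑ b, η μ α * η ν b * F α b)
    -- dual F*_{μν} = ½ ε_{μναβ} F^{αβ}
    (Fd : Fin 4 → Fin 4 → ℝ)
    (hFd : ∀ μ ν, Fd μ ν = (1 / 2) * ∑ α, ∑ b, lc μ ν α b * Fup α b)
    -- invariants F, G, U
    (Fi G U : ℝ)
    (hFi : Fi = ∑ μ, ∑ ν, F μ ν * Fup μ ν)
    (hG : G = ∑ μ, ∑ ν, Fd μ ν * Fup μ ν)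
    (hU : U = 1 + Fi / (2 * β ^ 2) - G ^ 2 / (16 * β ^ 4))
    -- mixed matrix F^μ{}_ν = η^{μα}F_{αν}
    (M : Matrix (Fin 4) (Fin 4) ℝ)
    (hM : ∀ μ ν, M μ ν = ∑ α, η μ α * F α ν) :
    ((1 : Matrix (Fin 4) (Fin 4) ℝ) + β⁻¹ • M).det = U ∧
    ((1 : Matrix (Fin 4) (Fin 4) ℝ) - (β ^ 2)⁻¹ • (M * M)).det = U ^ 2 := by
  obtain ⟨E, B, rfl⟩ : ∃ E B, F = fieldStrength E B := ⟨_, _, eq_fieldStrength_of_antisymm hFa⟩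
  have hFup' : Fup = fieldStrength (-E) B := by
    ext μ ν
    rw [hFup, raise_fieldStrength]
  have hFi' : Fi = 2 * (B ⬝ᵥ B - E ⬝ᵥ E) := by
    rw [hFi, hFup', sum_fieldStrength_mul_fieldStrength_neg]
  have hG' : G = 4 * (E ⬝ᵥ B) := by
    simp only [hG, hFd, hFup', mul_assoc, ← Finset.mul_sum, sum_lc_mul_fieldStrength,
      neg_dotProduct]
    ring
  have hM' : M = of η * fieldStrength E B := by
    ext μ ν
    rw [hM, mul_apply]
    rfl
  have hdet : ((1 : Matrix (Fin 4) (Fin 4) ℝ) + β⁻¹ • M).det = U := by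
    rw [hM', det_one_add_smul_eta_mul_fieldStrength, hU, hFi', hG']
    ring
  refine ⟨hdet, ?_⟩
  have hskew : (β⁻¹ • fieldStrength E B)ᵀ = -(β⁻¹ • fieldStrength E B) := by
    rw [transpose_smul, transpose_fieldStrength, smul_neg]
  have hsq : (β ^ 2)⁻¹ • (M * M) = (β⁻¹ • M) * (β⁻¹ • M) := by
    rw [smul_mul_smul_comm, ← mul_inv, sq β]
  rw [hsq, det_one_sub_mul_self, ← hdet, hM', ← Matrix.mul_smul,
    det_one_sub_mul_eq_det_one_add_mul eta_mul_eta transpose_eta hskew, sq]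

/-- Born–Infeld determinant formulas:
det(δ + F/β) = U and det(δ − F²/β²) = U². -/
theorem born_infeld_determinants
    (F : Fin 4 → Fin 4 → ℝ) (hFa : ∀ μ ν, F μ ν = - F ν μ)
    (β : ℝ) (hβ : β ≠ 0)
    -- raised components F^{μν}
    (Fup : Fin 4 → Fin 4 → ℝ)
    (hFup : ∀ μ ν, Fup μ ν = ∑ α, ∑ b, η μ α * η ν b * F α b)
    -- dual F*_{μν} = ½ ε_{μναβ} F^{αβ}
    (Fd : Fin 4 → Fin 4 → ℝ)
    (hFd : ∀ μ ν, Fd μ ν = (1 / 2) * ∑ α, ∑ b, lc μ ν α b * Fup α b)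
    -- invariants F, G, U
    (Fi G U : ℝ)
    (hFi : Fi = ∑ μ, ∑ ν, F μ ν * Fup μ ν)
    (hG : G = ∑ μ, ∑ ν, Fd μ ν * Fup μ ν)
    (hU : U = 1 + Fi / (2 * β ^ 2) - G ^ 2 / (16 * β ^ 4))
    -- mixed matrix F^μ{}_ν = η^{μα}F_{αν}
    (M : Matrix (Fin 4) (Fin 4) ℝ)
    (hM : ∀ μ ν, M μ ν = ∑ α, η μ α * F α ν) :
    ((1 : Matrix (Fin 4) (Fin 4) ℝ) + β⁻¹ • M).det = U ∧
    ((1 : Matrix (Fin 4) (Fin 4) ℝ) - (β ^ 2)⁻¹ • (M * M)).det = U ^ 2 :=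
  born_infeld_determinants_general F hFa β Fup hFup Fd hFd Fi G U hFi hG hU M hM
end
end

section
/- Consider the exceptional-dynamics differential equation 2 w u′(w) + u(w) − u(w)⁵ = 0 for a function u = L_w (the derivative of a Lagrangian L with respect to the kinetic invariant w). Then: (a) for every real λ, the function u(w) = (1 − λw²)^{−1/4} satisfies this equation on any interval of w where λw² < 1; and (b) conversely, if I ⊆ (0, ∞) is an interval and u : I → ℝ is C¹, strictly positive, and satisfies 2 w u′ + u − u⁵ = 0 on I, then there exists a real constant λ such that u(w) = (1 − λw²)^{−1/4} for all w ∈ I. -/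
/-!
The substitution `v = u⁻⁴` linearises the equation: `2 w u' + u - u⁵ = 0` becomes
`w v' = 2 (v - 1)`, so `(1 - u⁻⁴) / w²` is a first integral. Hence on an interval of positive
`w` a positive solution satisfies `u⁻⁴ = 1 - λ w²` for a constant `λ`, and conversely every such
`u` is a solution.
-/

open Set

namespace Real

theorem rpow_neg_one_div_natCast_pow {x : ℝ} (hx : 0 ≤ x) {n : ℕ} (hn : n ≠ 0) :
    (x ^ (-(1 / n : ℝ))) ^ n = x⁻¹ := by
  rw [rpow_neg hx, inv_pow, one_div, rpow_inv_natCast_pow hx hn]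

theorem inv_pow_rpow_neg_one_div_natCast {x : ℝ} (hx : 0 ≤ x) {n : ℕ} (hn : n ≠ 0) :
    ((x ^ n)⁻¹) ^ (-(1 / n : ℝ)) = x := by
  rw [inv_rpow (by positivity), rpow_neg (by positivity), inv_inv, one_div,
    pow_rpow_inv_natCast hx hn]

theorem rpow_neg_one_div_four_pow_four {x : ℝ} (hx : 0 ≤ x) :
    (x ^ (-(1 / 4) : ℝ)) ^ 4 = x⁻¹ := by
  simpa using rpow_neg_one_div_natCast_pow hx (n := 4) (by norm_num)

end Real

theorem Convex.is_const_of_hasDerivWithinAt_zero {s : Set ℝ} {f : ℝ → ℝ} (hs : Convex ℝ s)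
    (hf : ∀ x ∈ s, HasDerivWithinAt f 0 s x) {x y : ℝ} (hx : x ∈ s) (hy : y ∈ s) :
    f x = f y := by
  have h := hs.norm_image_sub_le_of_norm_hasDerivWithin_le hf (C := 0) (by simp) hx hy
  rw [zero_mul, norm_le_zero_iff, sub_eq_zero] at h
  exact h.symm

theorem hasDerivAt_one_sub_mul_sq_rpow_neg_quarter {lam w : ℝ} (h : lam * w ^ 2 < 1) :
    HasDerivAt (fun t : ℝ => (1 - lam * t ^ 2) ^ (-(1 / 4) : ℝ))
      (lam * w / 2 * ((1 - lam * w ^ 2) ^ (-(1 / 4) : ℝ)) ^ 5) w := by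
  have hX : 0 < 1 - lam * w ^ 2 := by linarith
  have hbase : HasDerivAt (fun t : ℝ => 1 - lam * t ^ 2) (-(lam * (2 * w))) w := by
    simpa using ((hasDerivAt_pow 2 w).const_mul lam).const_sub 1
  convert hbase.rpow_const (p := -(1 / 4)) (Or.inl hX.ne') using 1
  rw [Real.rpow_sub_one hX.ne', pow_succ', Real.rpow_neg_one_div_four_pow_four hX.le,
    div_eq_mul_inv]
  ring

theorem hasDerivWithinAt_one_sub_inv_pow_four_div_sq_zero {u : ℝ → ℝ} {u' w : ℝ} {s : Set ℝ}
    (hu : HasDerivWithinAt u u' s w) (hw : w ≠ 0) (huw : u w ≠ 0)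
    (hode : 2 * w * u' + u w - u w ^ 5 = 0) :
    HasDerivWithinAt (fun t => (1 - (u t ^ 4)⁻¹) / t ^ 2) 0 s w := by
  have hv := ((hu.fun_pow 4).inv (pow_ne_zero 4 huw)).const_sub 1
  refine (hv.fun_div ((hasDerivWithinAt_id w s).fun_pow 2) (pow_ne_zero 2 hw)).congr_deriv ?_
  simp only [id, Pi.inv_apply, Nat.cast_ofNat]
  field_simp
  linear_combination 2 * w * u w ^ 3 * hode

/-- the exceptional-dynamics ODE 2w u′ + u − u⁵ = 0.
(a) u = (1 − λw²)^{-1/4} is a solution wherever λw² < 1;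
(b) every positive C¹ solution on an interval I ⊆ (0,∞) has this form. -/
theorem exceptional_dynamics_ode :
    -- (a)
    (∀ lam : ℝ, ∀ w : ℝ, lam * w ^ 2 < 1 →
      2 * w * deriv (fun t : ℝ => (1 - lam * t ^ 2) ^ (-(1 / 4) : ℝ)) w
        + (1 - lam * w ^ 2) ^ (-(1 / 4) : ℝ)
        - ((1 - lam * w ^ 2) ^ (-(1 / 4) : ℝ)) ^ 5 = 0) ∧
    -- (b)
    (∀ I : Set ℝ, I.OrdConnected → I ⊆ Set.Ioi 0 →
      ∀ u : ℝ → ℝ, ContDiffOn ℝ 1 u I →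
      (∀ w ∈ I, 0 < u w) →
      (∀ w ∈ I, 2 * w * derivWithin u I w + u w - (u w) ^ 5 = 0) →
      ∃ lam : ℝ, ∀ w ∈ I, u w = (1 - lam * w ^ 2) ^ (-(1 / 4) : ℝ)) := by
  refine ⟨fun lam w h => ?_, fun I hI hIpos u hu hupos hode => ?_⟩
  · have hX : 0 < 1 - lam * w ^ 2 := by linarith
    rw [(hasDerivAt_one_sub_mul_sq_rpow_neg_quarter h).deriv, pow_succ,
      Real.rpow_neg_one_div_four_pow_four hX.le]
    linear_combination (-(1 - lam * w ^ 2) ^ (-(1 / 4) : ℝ)) * mul_inv_cancel₀ hX.ne'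
  rcases I.eq_empty_or_nonempty with rfl | ⟨w₀, hw₀⟩
  · exact ⟨0, by simp⟩
  set g : ℝ → ℝ := fun t => (1 - (u t ^ 4)⁻¹) / t ^ 2
  have hg : ∀ w ∈ I, HasDerivWithinAt g 0 I w := fun w hw =>
    hasDerivWithinAt_one_sub_inv_pow_four_div_sq_zero
      ((hu.differentiableOn one_ne_zero w hw).hasDerivWithinAt)
      (mem_Ioi.mp (hIpos hw)).ne' (hupos w hw).ne' (hode w hw)
  refine ⟨g w₀, fun w hw => ?_⟩
  have hv : 1 - g w₀ * w ^ 2 = (u w ^ 4)⁻¹ := by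
    rw [hI.convex.is_const_of_hasDerivWithinAt_zero hg hw₀ hw]
    have hw0 : w ≠ 0 := (mem_Ioi.mp (hIpos hw)).ne'
    simp only [g]
    field_simp
    ring
  rw [hv]
  simpa using (Real.inv_pow_rpow_neg_one_div_natCast (hupos w hw).le (n := 4) (by norm_num)).symm
end
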